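/- Let A be a tower of R-modules (inverse system over ℕ). If A satisfies the Mittag-Leffler condition — for each p there exists k such that the image of A_{p+r} → A_p equals the image of A_{p+k} → A_p for all r ≥ k — then lim¹ A = 0. -/

import Mathlib

/-!
The stable images `B p = im (A_{p + k p} → A_p)` form a subtower on which the transition maps
are onto, so every sequence `c` with `c n ∈ B n` is a boundary: lift `u n - c n` to
`u (n + 1) ∈ B (n + 1)` recursively. Modulo `∏ B n` every tail term `A_{n+s} → A_n`,
`s ≥ k n`, vanishes, so the telescoping sums `z n = ∑_{s < t n} y_{n+s}` (pushed down to
`A_n`), truncated at a cutoff `t n ≥ k n` with `t (n + 1) ≥ k n`, solve `d z = y` modulo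
`∏ B n`.
-/

/-- The composite transition map `A (p + r) →ₗ[R] A p` of a tower. -/
def towerTransition {R : Type*} [Ring R] {A : ℕ → Type*} [∀ n, AddCommGroup (A n)]
    [∀ n, Module R (A n)] (a : ∀ n, A (n + 1) →ₗ[R] A n) :
    ∀ (p r : ℕ), A (p + r) →ₗ[R] A p
  | _, 0 => LinearMap.id
  | p, r + 1 => (towerTransition a p r).comp (a (p + r))

section MittagLeffler

variable {R : Type*} [Ring R] {A : ℕ → Type*} [∀ n, AddCommGroup (A n)]
    [∀ n, Module R (A n)] {a : ∀ n, A (n + 1) →ₗ[R] A n}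

variable (a) in
/-- The map `d` whose cokernel is `lim¹`. -/
def towerDiff : (∀ n, A n) →ₗ[R] (∀ n, A n) :=
  LinearMap.pi fun n =>
    (LinearMap.proj n : (∀ m, A m) →ₗ[R] A n) - (a n).comp (LinearMap.proj (n + 1))

theorem towerDiff_apply (x : ∀ n, A n) (n : ℕ) : towerDiff a x n = x n - a n (x (n + 1)) := rfl

/- `A (p + 1 + r)` and `A (p + (r + 1))` are not definitionally equal; stating the next two
lemmas for families indexed by `ℕ` avoids casts between them. -/
theorem map_towerTransition_apply (y : ∀ m, A m) (p r : ℕ) :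
    a p (towerTransition a (p + 1) r (y (p + 1 + r))) =
      towerTransition a p (r + 1) (y (p + (r + 1))) := by
  induction r generalizing y with
  | zero => rfl
  | succ r ih => exact ih fun m => a m (y (m + 1))

theorem map_map_towerTransition (N : ∀ m, Submodule R (A m)) (p r : ℕ) :
    ((N (p + 1 + r)).map (towerTransition a (p + 1) r)).map (a p) =
      (N (p + (r + 1))).map (towerTransition a p (r + 1)) := by
  induction r generalizing N with
  | zero => exact (Submodule.map_comp _ _ _).symm
  | succ r ih =>
    have := ih fun m => (N (m + 1)).map (a m)
    simp only [← Submodule.map_comp] at this ⊢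
    exact this

theorem map_range_towerTransition (p r : ℕ) :
    (LinearMap.range (towerTransition a (p + 1) r)).map (a p) =
      LinearMap.range (towerTransition a p (r + 1)) := by
  simpa only [Submodule.map_top] using map_map_towerTransition (a := a) (fun _ => ⊤) p r

theorem range_towerTransition_eq_map_of_stable {k : ℕ → ℕ}
    (hk : ∀ p r, k p ≤ r →
      LinearMap.range (towerTransition a p r) = LinearMap.range (towerTransition a p (k p)))
    (p : ℕ) :
    LinearMap.range (towerTransition a p (k p)) =
      (LinearMap.range (towerTransition a (p + 1) (k (p + 1)))).map (a p) := by
  set r := max (k p) (k (p + 1))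
  rw [← hk p (r + 1) (by omega), ← hk (p + 1) r (by omega), map_range_towerTransition]

theorem pi_le_range_towerDiff {B : ∀ n, Submodule R (A n)}
    (hB : ∀ n, B n ≤ (B (n + 1)).map (a n)) :
    Submodule.pi Set.univ B ≤ LinearMap.range (towerDiff a) := by
  intro c hc
  replace hc : ∀ n, c n ∈ B n := fun n => hc n trivial
  have lift : ∀ n (v : B n), ∃ w : B (n + 1), a n w = v - c n := fun n v => by
    obtain ⟨w, hw, hwv⟩ := hB n (sub_mem v.2 (hc n))
    exact ⟨⟨w, hw⟩, hwv⟩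
  choose g hg using lift
  let u : ∀ n, B n := fun n => Nat.rec 0 (fun n v => g n v) n
  refine ⟨fun n => (u n).1, funext fun n => ?_⟩
  change (u n).1 - a n (g n (u n)) = c n
  rw [hg, sub_sub_cancel]

variable (a) in
def towerPartialSum (y : ∀ m, A m) (n m : ℕ) : A n :=
  ∑ s ∈ Finset.range m, towerTransition a n s (y (n + s))

theorem map_towerPartialSum (y : ∀ m, A m) (n m : ℕ) :
    a n (towerPartialSum a y (n + 1) m) = towerPartialSum a y n (m + 1) - y n := by
  simp only [towerPartialSum, map_sum, map_towerTransition_apply, Finset.sum_range_succ']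
  exact (add_sub_cancel_right _ _).symm

theorem towerPartialSum_sub_mem {k : ℕ → ℕ} {B : ∀ n, Submodule R (A n)}
    (hB : ∀ n s, k n ≤ s → LinearMap.range (towerTransition a n s) ≤ B n)
    (y : ∀ m, A m) {n m m' : ℕ} (hm : k n ≤ m) (hm' : k n ≤ m') :
    towerPartialSum a y n m - towerPartialSum a y n m' ∈ B n := by
  have from_k : ∀ m, k n ≤ m →
      towerPartialSum a y n m - towerPartialSum a y n (k n) ∈ B n := by
    intro m hm
    induction m, hm using Nat.le_induction with
    | base => simp
    | succ m hm ih =>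
      rw [towerPartialSum, Finset.sum_range_succ, add_sub_right_comm]
      exact add_mem ih (hB n m hm (LinearMap.mem_range_self _ _))
  simpa using sub_mem (from_k m hm) (from_k m' hm')

theorem range_towerDiff_sup_pi_eq_top {k : ℕ → ℕ} {B : ∀ n, Submodule R (A n)}
    (hB : ∀ n s, k n ≤ s → LinearMap.range (towerTransition a n s) ≤ B n) :
    LinearMap.range (towerDiff a) ⊔ Submodule.pi Set.univ B = ⊤ := by
  refine Submodule.eq_top_iff'.mpr fun y => ?_
  let t : ℕ → ℕ := fun n => (Finset.range (n + 1)).sup k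
  have hkt : ∀ n i, i ≤ n → k i ≤ t n := fun n i hi =>
    Finset.le_sup (f := k) (Finset.mem_range.mpr (Nat.lt_succ_of_le hi))
  let z : ∀ n, A n := fun n => towerPartialSum a y n (t n)
  have hz : y - towerDiff a z ∈ Submodule.pi Set.univ B := fun n _ => by
    have := towerPartialSum_sub_mem hB y (m := t (n + 1) + 1)
      ((hkt (n + 1) n (by omega)).trans (by omega)) (hkt n n le_rfl)
    rw [Pi.sub_apply, towerDiff_apply, map_towerPartialSum]
    change _ ∈ B n
    convert this using 1
    abel
  simpa using Submodule.add_mem_sup (LinearMap.mem_range_self (towerDiff a) z) hz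

end MittagLeffler

/-- Mittag-Leffler condition implies `lim¹ = 0` for a tower of `R`-modules:
if for each `p` the images of `A_{p+r} → A_p` stabilize, then the map
`d : ∏ A_n → ∏ A_n`, `(x_n) ↦ (x_n − a_n (x_{n+1}))`, is surjective. -/
theorem stmt11 {R : Type*} [Ring R] (A : ℕ → Type*) [∀ n, AddCommGroup (A n)]
    [∀ n, Module R (A n)] (a : ∀ n, A (n + 1) →ₗ[R] A n)
    (hML : ∀ p, ∃ k, ∀ r, k ≤ r →
      LinearMap.range (towerTransition a p r) = LinearMap.range (towerTransition a p k)) :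
    LinearMap.range (LinearMap.pi (fun n =>
      (LinearMap.proj n : (∀ m, A m) →ₗ[R] A n) - (a n).comp (LinearMap.proj (n + 1)))) = ⊤ := by
  choose k hk using hML
  let B : ∀ p, Submodule R (A p) := fun p => LinearMap.range (towerTransition a p (k p))
  have hB_onto : ∀ p, B p ≤ (B (p + 1)).map (a p) := fun p =>
    (range_towerTransition_eq_map_of_stable hk p).le
  have hB_tail : ∀ n s, k n ≤ s → LinearMap.range (towerTransition a n s) ≤ B n :=
    fun n s hs => (hk n s hs).le
  change LinearMap.range (towerDiff a) = ⊤
  rw [← range_towerDiff_sup_pi_eq_top hB_tail, left_eq_sup]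
  exact pi_le_range_towerDiff hB_onto
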